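/- Let F be a nonzero homogeneous polynomial of degree d in x_0,…,x_m over ℂ with sbr(F) = sr(F) = ρ ≤ d. Suppose there exist two distinct finite sets A ≠ B of points of ℙ^m, each of cardinality ρ, such that F lies in the linear span of { L_a^d : a ∈ A } and in the linear span of { L_b^d : b ∈ B }. Then there is a line ℓ ⊂ ℙ^m such that #(ℓ ∩ A) ≥ (d + 2)/2. -/

import Mathlib

open MvPolynomial Filter Module

noncomputable section

/-- `F` is a sum of `s` `d`-th powers of linear forms in `m+1` variables. -/
def isSumOfPowers (m d s : ℕ) (F : MvPolynomial (Fin (m+1)) ℂ) : Prop :=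
  ∃ L : Fin s → MvPolynomial (Fin (m+1)) ℂ,
    (∀ i, (L i).IsHomogeneous 1) ∧ F = ∑ i, (L i) ^ d

/-- The symmetric rank of `F`. -/
def symRank (m d : ℕ) (F : MvPolynomial (Fin (m+1)) ℂ) : ℕ :=
  sInf { r | isSumOfPowers m d r F }

/-- `F` lies in the Euclidean closure of the set of sums of `s` `d`-th powers of
linear forms (equivalently, `F` is a coefficientwise limit of a sequence of such sums). -/
def isBorderSumOfPowers (m d s : ℕ) (F : MvPolynomial (Fin (m+1)) ℂ) : Prop :=
  ∃ G : ℕ → MvPolynomial (Fin (m+1)) ℂ,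
    (∀ n, isSumOfPowers m d s (G n)) ∧
    ∀ μ : (Fin (m+1)) →₀ ℕ,
      Tendsto (fun n => MvPolynomial.coeff μ (G n)) atTop (nhds (MvPolynomial.coeff μ F))

/-- The symmetric border rank of `F`. -/
def symBorderRank (m d : ℕ) (F : MvPolynomial (Fin (m+1)) ℂ) : ℕ :=
  sInf { s | isBorderSumOfPowers m d s F }

/-- The linear form `∑ v i • x i` associated to a vector `v : ℂ^{m+1}`. -/
def toLinForm (m : ℕ) (v : Fin (m+1) → ℂ) : MvPolynomial (Fin (m+1)) ℂ :=
  ∑ i, MvPolynomial.C (v i) * MvPolynomial.X i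

/-- The `d`-th power `L_p^d` of a linear form representing the point `p ∈ ℙ^m`. -/
def vpow (m d : ℕ) (p : Projectivization ℂ (Fin (m+1) → ℂ)) : MvPolynomial (Fin (m+1)) ℂ :=
  (toLinForm m p.rep) ^ d

/-!
Write `F = ∑_{a ∈ A} α_a L_a^d = ∑_{b ∈ B} β_b L_b^d`. Minimality of the rank forces all `α_a`,
`β_b` to be nonzero, so `c = α - β` is a nonzero linear relation among the `d`-th powers of the
at most `2ρ ≤ 2d` points of `A ∪ B`. Polarizing the relation against `d` linear forms shows
`c_p = 0` whenever the other points of the support can be covered by `d` groups whose spans miss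
`p`. If no line through `p` carried `d + 2` points of the support, the other points could be
paired off along distinct lines through `p` into at most `d` such groups; and once a line `ℓ`
carries `d + 2` points, the points off `ℓ` can be isolated one at a time. So the support of `c`
lies on a line `ℓ` and has at least `d + 2` points. Off `ℓ` the sets `A` and `B` agree, hence
they have equally many points on `ℓ`, and these cover the support.
-/

open Finset
open scoped LinearAlgebra.Projectivization

section Separation

variable {K V : Type*} [Field K] [AddCommGroup V] [Module K V]

theorem exists_dual_apply_ne_zero_of_notMem_span {s : Set V} {x : V}
    (hx : x ∉ Submodule.span K s) : ∃ φ : Dual K V, φ x ≠ 0 ∧ ∀ y ∈ s, φ y = 0 := by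
  obtain ⟨φ, hφx, hφs⟩ := Submodule.exists_dual_map_eq_bot_of_notMem hx inferInstance
  refine ⟨φ, hφx, fun y hy => ?_⟩
  simpa [hφs] using Submodule.mem_map_of_mem (f := φ) (Submodule.subset_span (R := K) hy)

end Separation

section Polarization

variable {K V ι : Type*} [Field K] [CharZero K] [AddCommGroup V] [Module K V]
  {Z : Finset ι} {w : ι → V}

-- One polarization step: differentiate `t ↦ ∑ c q (φ + t ψ)(w q) ^ (d + 1)` at `t = 0`.
open Polynomial in
theorem sum_mul_mul_pow_eq_zero_of_sum_mul_pow_succ_eq_zero {c : ι → K} {d : ℕ}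
    (h : ∀ φ : Dual K V, ∑ q ∈ Z, c q * φ (w q) ^ (d + 1) = 0) (ψ φ : Dual K V) :
    ∑ q ∈ Z, c q * ψ (w q) * φ (w q) ^ d = 0 := by
  let P : K[X] := ∑ q ∈ Z, Polynomial.C (c q) *
    (Polynomial.C (φ (w q)) + Polynomial.X * Polynomial.C (ψ (w q))) ^ (d + 1)
  have hP : P = 0 := Polynomial.funext fun t => by
    simpa [P, eval_finsetSum, mul_comm _ t] using h (φ + t • ψ)
  have hP' : (derivative P).eval 0 = ∑ q ∈ Z, c q * ((d + 1) * φ (w q) ^ d * ψ (w q)) := by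
    simp [P, eval_finsetSum, derivative_pow]
  rw [hP, derivative_zero, Polynomial.eval_zero] at hP'
  have hd : (d + 1 : K) ≠ 0 := Nat.cast_add_one_ne_zero d
  rw [← mul_right_inj' hd, mul_zero, hP', mul_sum]
  exact sum_congr rfl fun q _ => by ring

theorem sum_mul_prod_map_eq_zero (s : Multiset (Dual K V)) {c : ι → K}
    (h : ∀ φ : Dual K V, ∑ q ∈ Z, c q * φ (w q) ^ Multiset.card s = 0) :
    ∑ q ∈ Z, c q * (s.map (· (w q))).prod = 0 := by
  induction s using Multiset.induction generalizing c with
  | empty => simpa using h 0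
  | cons ψ s ih =>
    simp only [Multiset.map_cons, Multiset.prod_cons, ← mul_assoc]
    exact ih fun φ => sum_mul_mul_pow_eq_zero_of_sum_mul_pow_succ_eq_zero (by simpa using h) ψ φ

theorem coeff_eq_zero_of_cover {c : ι → K} {d : ℕ}
    (h : ∀ φ : Dual K V, ∑ q ∈ Z, c q * φ (w q) ^ d = 0) {p : ι} (hp : p ∈ Z) (hwp : w p ≠ 0)
    (G : Finset (Finset ι)) (hG : #G ≤ d) (hcover : ∀ q ∈ Z, q ≠ p → ∃ g ∈ G, q ∈ g)
    (havoid : ∀ g ∈ G, w p ∉ Submodule.span K (w '' g)) :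
    c p = 0 := by
  choose! φ hφp hφ using fun g hg => exists_dual_apply_ne_zero_of_notMem_span (havoid g hg)
  obtain ⟨φ₀, hφ₀, -⟩ := exists_dual_apply_ne_zero_of_notMem_span (K := K) (s := ∅)
    (by simpa using hwp)
  let s := G.val.map φ + Multiset.replicate (d - #G) φ₀
  have hs : Multiset.card s = d := by
    simp only [s, Multiset.card_add, Multiset.card_map, card_val, Multiset.card_replicate]
    omega
  have hrel := sum_mul_prod_map_eq_zero s (hs ▸ h)
  rw [sum_eq_single p _ (absurd hp)] at hrel
  · refine (mul_eq_zero.1 hrel).resolve_right (Multiset.prod_ne_zero ?_)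
    simp only [s, Multiset.map_add, Multiset.map_map, Multiset.map_replicate, Multiset.mem_add,
      Multiset.mem_map, Multiset.mem_replicate]
    rintro (⟨g, hg, hg0⟩ | ⟨-, h0⟩)
    · exact hφp g hg hg0
    · exact hφ₀ h0.symm
  · intro q hq hqp
    obtain ⟨g, hg, hqg⟩ := hcover q hq hqp
    refine mul_eq_zero_of_right _ (Multiset.prod_eq_zero ?_)
    simp only [s, Multiset.map_add, Multiset.mem_add, Multiset.mem_map]
    exact Or.inl ⟨φ g, ⟨g, hg, rfl⟩, hφ g hg (w q) ⟨q, hqg, rfl⟩⟩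

end Polarization

section Pairing

variable {X Y : Type*} [DecidableEq X] [DecidableEq Y]

theorem card_fiber_erase_erase_le (f : X → Y) {B : ℕ} {Q : Finset X} (hQ : #Q ≤ 2 * B + 2)
    {x y : X} (hx : x ∈ Q) (hy : y ∈ Q) (hxy : f y ≠ f x)
    (hmax : ∀ z ∈ Q, #{w ∈ Q | f w = f z} ≤ #{w ∈ Q | f w = f x})
    (hfib : ∀ z ∈ Q, #{w ∈ Q | f w = f z} ≤ B + 1) (z : X) (hz : z ∈ Q) :
    #{w ∈ (Q.erase x).erase y | f w = f z} ≤ B := by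
  have hFz := hfib z hz
  have hzmax := hmax z hz
  set Fz := {w ∈ Q | f w = f z}
  have hsub : {w ∈ (Q.erase x).erase y | f w = f z} ⊆ (Fz.erase x).erase y := by
    intro w; simp only [Fz, mem_filter, mem_erase]; tauto
  refine (card_le_card hsub).trans ?_
  have h1 := card_erase_le (s := Fz.erase x) (a := y)
  have h2 := card_erase_le (s := Fz) (a := x)
  by_cases hzx : f z = f x
  · rw [card_erase_of_mem (s := Fz) (by simp [Fz, hx, hzx])] at h1
    omega
  by_cases hzy : f z = f y
  · rw [card_erase_of_mem (by simp [Fz, hy, hzy, ne_of_apply_ne f hxy])]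
    omega
  have hdisj : Disjoint Fz {w ∈ Q | f w = f x} := by
    rw [disjoint_filter]; intro w _ h h'; exact hzx (h.symm.trans h')
  have hunion : Fz ∪ {w ∈ Q | f w = f x} ⊆ Q.erase y := by
    intro w; simp only [Fz, mem_union, mem_filter, mem_erase]
    rintro (⟨hw, hfw⟩ | ⟨hw, hfw⟩) <;> refine ⟨?_, hw⟩ <;> rintro rfl
    · exact hzy hfw.symm
    · exact hxy hfw
  have := card_le_card hunion
  rw [card_union_of_disjoint hdisj, card_erase_of_mem hy] at this
  omega

theorem exists_pair_cover_of_card_fiber_le (f : X → Y) (B : ℕ) (Q : Finset X)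
    (hfib : ∀ x ∈ Q, #{y ∈ Q | f y = f x} ≤ B) (hQ : #Q ≤ 2 * B) :
    ∃ G : Finset (Finset X), #G ≤ B ∧ (∀ x ∈ Q, ∃ g ∈ G, x ∈ g) ∧
      ∀ g ∈ G, ∃ x ∈ Q, ∃ y ∈ Q, g = {x, y} ∧ (f x = f y → x = y) := by
  induction B generalizing Q with
  | zero => exact ⟨∅, by simp, by simp_all, by simp⟩
  | succ B ih =>
    rcases Q.eq_empty_or_nonempty with rfl | hne
    · exact ⟨∅, by simp, by simp, by simp⟩
    obtain ⟨x, hx, hmax⟩ := exists_max_image Q (fun z => #{w ∈ Q | f w = f z}) hne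
    obtain ⟨y, hy, hxy, hfib', hQ'⟩ : ∃ y ∈ Q, (f x = f y → x = y) ∧
        (∀ z ∈ (Q.erase x).erase y, #{w ∈ (Q.erase x).erase y | f w = f z} ≤ B) ∧
        #((Q.erase x).erase y) ≤ 2 * B := by
      by_cases hsplit : ∃ y ∈ Q, f y ≠ f x
      · obtain ⟨y, hy, hyx⟩ := hsplit
        refine ⟨y, hy, fun h => absurd h.symm hyx, fun z hz =>
          card_fiber_erase_erase_le f (by omega) hx hy hyx hmax hfib z
            (mem_of_mem_erase (mem_of_mem_erase hz)), ?_⟩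
        rw [card_erase_of_mem (mem_erase.2 ⟨ne_of_apply_ne f hyx, hy⟩), card_erase_of_mem hx]
        omega
      · push Not at hsplit
        have hQx : #Q ≤ B + 1 := by
          simpa [filter_true_of_mem hsplit] using hfib x hx
        have hQ' : #((Q.erase x).erase x) ≤ B := by
          rw [erase_idem, card_erase_of_mem hx]; omega
        exact ⟨x, hx, fun _ => rfl, fun z _ => (card_filter_le _ _).trans hQ', by omega⟩
    obtain ⟨G, hG, hcover, hpair⟩ := ih _ hfib' hQ'
    refine ⟨insert {x, y} G, (card_insert_le _ _).trans (by omega), fun z hz => ?_, ?_⟩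
    · by_cases hzxy : z = x ∨ z = y
      · exact ⟨{x, y}, mem_insert_self _ _, by simpa using hzxy⟩
      · push Not at hzxy
        obtain ⟨g, hg, hzg⟩ := hcover z (by simp [hz, hzxy.1, hzxy.2])
        exact ⟨g, mem_insert_of_mem hg, hzg⟩
    · simp only [mem_insert, forall_eq_or_imp]
      refine ⟨⟨x, hx, y, hy, rfl, hxy⟩, fun g hg => ?_⟩
      obtain ⟨x', hx', y', hy', rfl, h⟩ := hpair g hg
      exact ⟨x', mem_of_mem_erase (mem_of_mem_erase hx'), y',
        mem_of_mem_erase (mem_of_mem_erase hy'), rfl, h⟩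

end Pairing

theorem card_le_two_mul_card_filter {α : Type*} [DecidableEq α] {A B S : Finset α}
    (P : α → Prop) [DecidablePred P] (hAB : #A = #B) (hoff : ∀ q, ¬ P q → (q ∈ A ↔ q ∈ B))
    (hS : S ⊆ A ∪ B) (hSP : ∀ q ∈ S, P q) : #S ≤ 2 * #{q ∈ A | P q} := by
  have hnot : {q ∈ A | ¬ P q} = {q ∈ B | ¬ P q} := by
    ext q; simp only [mem_filter]; by_cases hq : P q <;> simp [hq, hoff]
  have hA : #{q ∈ A | P q} + #{q ∈ A | ¬ P q} = #A := card_filter_add_card_filter_not _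
  have hB : #{q ∈ B | P q} + #{q ∈ B | ¬ P q} = #B := card_filter_add_card_filter_not _
  have hsub : S ⊆ {q ∈ A | P q} ∪ {q ∈ B | P q} := fun q hq => by
    rcases mem_union.1 (hS hq) with h | h <;> simp [h, hSP q hq]
  have := (card_le_card hsub).trans (card_union_le _ _)
  rw [hnot] at hA
  omega

namespace Projectivization

variable {K V : Type*} [Field K] [AddCommGroup V] [Module K V]

theorem submodule_le_iff_rep_mem {p : ℙ K V} {W : Submodule K V} :
    p.submodule ≤ W ↔ p.rep ∈ W := by
  rw [submodule_eq, Submodule.span_singleton_le_iff_mem]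

theorem rep_mem_submodule_iff {p q : ℙ K V} : p.rep ∈ q.submodule ↔ p = q := by
  refine ⟨fun h => submodule_injective ?_, fun h => h ▸ submodule_le_iff_rep_mem.1 le_rfl⟩
  exact Submodule.eq_of_le_of_finrank_le (submodule_le_iff_rep_mem.2 h)
    (by rw [finrank_submodule, finrank_submodule])

theorem finrank_sup_submodule_le (p q : ℙ K V) :
    finrank K ↥(p.submodule ⊔ q.submodule) ≤ 2 :=
  (Submodule.finrank_add_le_finrank_add_finrank _ _).trans
    (by rw [finrank_submodule, finrank_submodule])

theorem finrank_sup_submodule {p q : ℙ K V} (h : p ≠ q) :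
    finrank K ↥(p.submodule ⊔ q.submodule) = 2 := by
  rw [← linearIndependent_pair_iff_ne] at h
  rw [submodule_eq, submodule_eq, ← Submodule.span_insert, ← Matrix.range_cons_cons_empty _ _ ![],
    finrank_span_eq_card h, Fintype.card_fin]

theorem sup_submodule_eq_of_le {p x y : ℙ K V} (hx : p ≠ x) (hy : p ≠ y)
    (h : p.submodule ≤ x.submodule ⊔ y.submodule) :
    p.submodule ⊔ x.submodule = p.submodule ⊔ y.submodule := by
  have key : ∀ z, p ≠ z → z.submodule ≤ x.submodule ⊔ y.submodule →
      p.submodule ⊔ z.submodule = x.submodule ⊔ y.submodule := fun z hz hzl =>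
    Submodule.eq_of_le_of_finrank_le (sup_le h hzl)
      ((finrank_sup_submodule_le x y).trans (finrank_sup_submodule hz).ge)
  rw [key x hx le_sup_left, key y hy le_sup_right]

end Projectivization

section PowerRelation

open scoped Classical

variable {K V : Type*} [Field K] [CharZero K] [AddCommGroup V] [Module K V]

/-- `c` is a linear relation among the `d`-th powers of the linear forms `q.rep` on `Dual K V`. -/
def IsPowerRelation (d : ℕ) (c : ℙ K V →₀ K) : Prop :=
  ∀ φ : Dual K V, ∑ q ∈ c.support, c q * φ q.rep ^ d = 0

namespace IsPowerRelation

variable {d : ℕ} {c : ℙ K V →₀ K}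

theorem forall_mem_support_le (hc : IsPowerRelation d c) (hcard : #c.support ≤ 2 * d)
    {W : Submodule K V} (hW : d + 2 ≤ #{q ∈ c.support | q.submodule ≤ W}) :
    ∀ q ∈ c.support, q.submodule ≤ W := by
  intro q hq
  by_contra hqW
  set onW := {r ∈ c.support | r.submodule ≤ W}
  set offW := {r ∈ c.support | ¬ r.submodule ≤ W}
  have hOff : q ∈ offW := mem_filter.2 ⟨hq, hqW⟩
  refine Finsupp.mem_support_iff.1 hq (coeff_eq_zero_of_cover hc hq q.rep_nonzero
    (insert onW ((offW.erase q).image fun r => {r})) ?_ ?_ ?_)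
  · have : #onW + #offW = #c.support := card_filter_add_card_filter_not _
    have := card_erase_of_mem hOff
    have := card_image_le (s := offW.erase q) (f := fun r => ({r} : Finset (ℙ K V)))
    have := card_insert_le onW ((offW.erase q).image fun r => {r})
    omega
  · intro r hr hrq
    by_cases hrW : r.submodule ≤ W
    · exact ⟨onW, mem_insert_self _ _, mem_filter.2 ⟨hr, hrW⟩⟩
    · refine ⟨{r}, mem_insert_of_mem (mem_image_of_mem _ ?_), mem_singleton_self r⟩
      exact mem_erase.2 ⟨hrq, mem_filter.2 ⟨hr, hrW⟩⟩
  · simp only [mem_insert, mem_image, forall_eq_or_imp, forall_exists_index, and_imp]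
    refine ⟨fun h => hqW ?_, ?_⟩
    · refine Projectivization.submodule_le_iff_rep_mem.2 (Submodule.span_le.2 ?_ h)
      rintro _ ⟨r, hr, rfl⟩
      exact Projectivization.submodule_le_iff_rep_mem.1 (mem_filter.1 hr).2
    · rintro _ r hr rfl
      rw [coe_singleton, Set.image_singleton, ← Projectivization.submodule_eq,
        Projectivization.rep_mem_submodule_iff]
      exact (ne_of_mem_erase hr).symm

theorem exists_line (hc : IsPowerRelation d c) (hcard : #c.support ≤ 2 * d) {p : ℙ K V}
    (hp : p ∈ c.support) :
    ∃ W : Submodule K V, finrank K W = 2 ∧ d + 2 ≤ #{q ∈ c.support | q.submodule ≤ W} := by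
  by_contra! hno
  let f (r : ℙ K V) : Submodule K V := p.submodule ⊔ r.submodule
  have hfib : ∀ x ∈ c.support.erase p, #{y ∈ c.support.erase p | f y = f x} ≤ d := by
    intro x hx
    have hsub : insert p {y ∈ c.support.erase p | f y = f x} ⊆
        {q ∈ c.support | q.submodule ≤ f x} := by
      refine insert_subset (mem_filter.2 ⟨hp, le_sup_left⟩) fun y hy => ?_
      obtain ⟨hy, hyx⟩ := mem_filter.1 hy
      exact mem_filter.2 ⟨mem_of_mem_erase hy, hyx ▸ le_sup_right⟩
    have := card_le_card hsub
    rw [card_insert_of_notMem (by simp)] at this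
    have := hno (f x) (Projectivization.finrank_sup_submodule (ne_of_mem_erase hx).symm)
    omega
  obtain ⟨G, hG, hcover, hpair⟩ :=
    exists_pair_cover_of_card_fiber_le f d _ hfib (card_erase_le.trans hcard)
  refine Finsupp.mem_support_iff.1 hp (coeff_eq_zero_of_cover hc hp p.rep_nonzero G hG
    (fun q hq hqp => hcover q (mem_erase.2 ⟨hqp, hq⟩)) ?_)
  intro g hg hmem
  obtain ⟨x, hx, y, hy, rfl, hxy⟩ := hpair g hg
  have hpx := (ne_of_mem_erase hx).symm
  rw [coe_pair, Set.image_pair, Submodule.span_insert, ← Projectivization.submodule_eq,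
    ← Projectivization.submodule_eq] at hmem
  obtain rfl := hxy (Projectivization.sup_submodule_eq_of_le hpx (ne_of_mem_erase hy).symm
    (Projectivization.submodule_le_iff_rep_mem.2 hmem))
  rw [sup_idem, Projectivization.rep_mem_submodule_iff] at hmem
  exact hpx hmem

theorem exists_line_forall_mem_support_le (hc : IsPowerRelation d c)
    (hcard : #c.support ≤ 2 * d) (hc0 : c ≠ 0) :
    ∃ W : Submodule K V, finrank K W = 2 ∧ d + 2 ≤ #c.support ∧
      ∀ q ∈ c.support, q.submodule ≤ W := by
  obtain ⟨p, hp⟩ := Finsupp.support_nonempty_iff.2 hc0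
  obtain ⟨W, hW, hWcard⟩ := hc.exists_line hcard hp
  exact ⟨W, hW, hWcard.trans (card_filter_le _ _), hc.forall_mem_support_le hcard hWcard⟩

end IsPowerRelation

end PowerRelation

theorem isSumOfPowers_sum {ι : Type*} (m d : ℕ) (s : Finset ι)
    (L : ι → MvPolynomial (Fin (m+1)) ℂ) (hL : ∀ i ∈ s, (L i).IsHomogeneous 1) :
    isSumOfPowers m d #s (∑ i ∈ s, L i ^ d) := by
  refine ⟨fun j => L (s.equivFin.symm j), fun j => hL _ (s.equivFin.symm j).2, ?_⟩
  rw [← sum_coe_sort s, ← s.equivFin.symm.sum_comp]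

theorem toLinForm_isHomogeneous (m : ℕ) (v : Fin (m+1) → ℂ) : (toLinForm m v).IsHomogeneous 1 :=
  IsHomogeneous.sum _ _ _ fun i _ => by
    simpa using (isHomogeneous_C _ (v i)).mul (isHomogeneous_X ℂ i)

theorem toLinForm_smul (m : ℕ) (a : ℂ) (v : Fin (m+1) → ℂ) :
    toLinForm m (a • v) = C a * toLinForm m v := by
  simp [toLinForm, mul_sum, mul_assoc]

theorem eval_toLinForm (m : ℕ) (φ : Dual ℂ (Fin (m+1) → ℂ)) (v : Fin (m+1) → ℂ) :
    eval (fun i => φ (Pi.single i 1)) (toLinForm m v) = φ v := by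
  simp only [toLinForm, map_sum, map_mul, eval_C, eval_X, φ.pi_apply_eq_sum_univ v, smul_eq_mul]
  congr! with i
  simp [Pi.single_apply, eq_comm]

theorem symRank_linearCombination_vpow_le {m d : ℕ} (hd : d ≠ 0)
    (a : Projectivization ℂ (Fin (m+1) → ℂ) →₀ ℂ) :
    symRank m d (Finsupp.linearCombination ℂ (vpow m d) a) ≤ #a.support := by
  choose ξ hξ using fun p => IsAlgClosed.exists_pow_nat_eq (a p) (Nat.pos_of_ne_zero hd)
  refine Nat.sInf_le ?_
  have : Finsupp.linearCombination ℂ (vpow m d) a =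
      ∑ p ∈ a.support, toLinForm m (ξ p • p.rep) ^ d := by
    rw [Finsupp.linearCombination_apply, Finsupp.sum]
    refine sum_congr rfl fun p _ => ?_
    rw [toLinForm_smul, mul_pow, ← map_pow, hξ, vpow, smul_eq_C_mul]
  rw [this]
  exact isSumOfPowers_sum m d _ _ fun p _ => toLinForm_isHomogeneous m _

theorem isPowerRelation_of_linearCombination_vpow_eq_zero {m d : ℕ}
    {c : Projectivization ℂ (Fin (m+1) → ℂ) →₀ ℂ}
    (h : Finsupp.linearCombination ℂ (vpow m d) c = 0) : IsPowerRelation d c := by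
  intro φ
  have := congrArg (eval fun i => φ (Pi.single i 1)) h
  simpa [Finsupp.linearCombination_apply, Finsupp.sum, vpow, eval_toLinForm] using this

theorem exists_support_eq_of_mem_span_vpow {m d : ℕ} (hd : d ≠ 0)
    {F : MvPolynomial (Fin (m+1)) ℂ} {A : Finset (Projectivization ℂ (Fin (m+1) → ℂ))}
    (hr : symRank m d F = #A) (hFA : F ∈ Submodule.span ℂ (vpow m d '' A)) :
    ∃ a : Projectivization ℂ (Fin (m+1) → ℂ) →₀ ℂ,
      a.support = A ∧ Finsupp.linearCombination ℂ (vpow m d) a = F := by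
  obtain ⟨a, ha, rfl⟩ := (Finsupp.mem_span_image_iff_linearCombination ℂ).1 hFA
  refine ⟨a, eq_of_subset_of_card_le (by simpa [Finsupp.mem_supported] using ha) ?_, rfl⟩
  exact hr ▸ symRank_linearCombination_vpow_le hd a

theorem line_from_two_decompositions_general (m d ρ : ℕ) (F : MvPolynomial (Fin (m+1)) ℂ)
    (hr : symRank m d F = ρ) (hρd : ρ ≤ d)
    (A B : Finset (Projectivization ℂ (Fin (m+1) → ℂ))) (hAB : A ≠ B)
    (hA : A.card = ρ) (hB : B.card = ρ)
    (hFA : F ∈ Submodule.span ℂ (vpow m d '' (A : Set (Projectivization ℂ (Fin (m+1) → ℂ)))))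
    (hFB : F ∈ Submodule.span ℂ (vpow m d '' (B : Set (Projectivization ℂ (Fin (m+1) → ℂ))))) :
    ∃ ℓ : Submodule ℂ (Fin (m+1) → ℂ), finrank ℂ ℓ = 2 ∧
      d + 2 ≤ 2 * ((A : Set (Projectivization ℂ (Fin (m+1) → ℂ))) ∩
        {p | p.submodule ≤ ℓ}).ncard := by
  classical
  have hd : d ≠ 0 := by
    rintro rfl
    exact hAB (by rw [card_eq_zero.1 (by omega : #A = 0), card_eq_zero.1 (by omega : #B = 0)])
  obtain ⟨a, haA, rfl⟩ := exists_support_eq_of_mem_span_vpow hd (hr.trans hA.symm) hFA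
  obtain ⟨b, hbB, hb⟩ := exists_support_eq_of_mem_span_vpow hd (hr.trans hB.symm) hFB
  have hc : IsPowerRelation d (a - b) :=
    isPowerRelation_of_linearCombination_vpow_eq_zero (by rw [map_sub, hb, sub_self])
  have hc0 : a - b ≠ 0 := fun h => hAB (by rw [← haA, ← hbB, sub_eq_zero.1 h])
  have hcA : (a - b).support ⊆ A ∪ B := haA ▸ hbB ▸ Finsupp.support_sub
  obtain ⟨W, hW, hWcard, hsupp⟩ := hc.exists_line_forall_mem_support_le
    ((card_le_card hcA).trans ((card_union_le A B).trans (by omega))) hc0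
  refine ⟨W, hW, ?_⟩
  have hoff : ∀ q, ¬ q.submodule ≤ W → (q ∈ A ↔ q ∈ B) := fun q hq => by
    have : a q = b q := sub_eq_zero.1 (Finsupp.notMem_support_iff.1 fun h => hq (hsupp q h))
    rw [← haA, ← hbB, Finsupp.mem_support_iff, Finsupp.mem_support_iff, this]
  have hset : (A : Set (Projectivization ℂ (Fin (m+1) → ℂ))) ∩ {p | p.submodule ≤ W} =
      ↑{q ∈ A | q.submodule ≤ W} := by
    ext; simp
  rw [hset, Set.ncard_coe_finset]
  exact hWcard.trans (card_le_two_mul_card_filter _ (hA.trans hB.symm) hoff hcA hsupp)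

/-- **Lemma 3 of Ballico–Bernardi** (reduced case).  If `sbr F = sr F = ρ ≤ d` and
`F` lies in the spans of the `d`-th powers of two distinct `ρ`-point subsets
`A ≠ B` of `ℙ^m`, then some line `ℓ` meets `A` in at least `(d+2)/2` points. -/
theorem line_from_two_decompositions (m d ρ : ℕ) (F : MvPolynomial (Fin (m+1)) ℂ)
    (hF0 : F ≠ 0) (hFhom : F.IsHomogeneous d)
    (hbr : symBorderRank m d F = ρ) (hr : symRank m d F = ρ) (hρd : ρ ≤ d)
    (A B : Finset (Projectivization ℂ (Fin (m+1) → ℂ))) (hAB : A ≠ B)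
    (hA : A.card = ρ) (hB : B.card = ρ)
    (hFA : F ∈ Submodule.span ℂ (vpow m d '' (A : Set (Projectivization ℂ (Fin (m+1) → ℂ)))))
    (hFB : F ∈ Submodule.span ℂ (vpow m d '' (B : Set (Projectivization ℂ (Fin (m+1) → ℂ))))) :
    ∃ ℓ : Submodule ℂ (Fin (m+1) → ℂ), finrank ℂ ℓ = 2 ∧
      d + 2 ≤ 2 * ((A : Set (Projectivization ℂ (Fin (m+1) → ℂ))) ∩
        {p | p.submodule ≤ ℓ}).ncard :=
  line_from_two_decompositions_general m d ρ F hr hρd A B hAB hA hB hFA hFB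

end
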